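/- Let x and y be p-strings both starting with p-symbols, let e = lcp∞(⟨x[2..]⟩,⟨y[2..]⟩), and suppose fce(x) ≤ e and fce(x) < fce(y). Then ⟨x⟩ < ⟨y⟩, lcp(⟨x⟩,⟨y⟩) = h where h is the position of the first occurrence of x[1] in x[2..], and lcp∞(⟨x⟩,⟨y⟩) = fce(x). (This holds regardless of whether ⟨x[2..]⟩ < ⟨y[2..]⟩ or the reverse, by symmetry of the e ≥ fce condition.) -/

import Mathlib

/-- Symbols of a parameterized string: static symbols `s a` (from Σs) and
parameter symbols `p a` (from Σp). -/
inductive PSym where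
  | s : ℕ → PSym
  | p : ℕ → PSym
deriving DecidableEq

/-- Symbols of a p-encoded string: static symbols, finite distances, and ∞. -/
inductive Enc where
  | s : ℕ → Enc
  | fin : ℕ → Enc
  | inf : Enc
deriving DecidableEq

/-- Order embedding: static symbols < natural numbers < ∞. -/
def Enc.toPair : Enc → ℕ ×ₗ ℕ
  | .s a => toLex (0, a)
  | .fin d => toLex (1, d)
  | .inf => toLex (2, 0)

instance : LinearOrder Enc :=
  LinearOrder.lift' Enc.toPair (by
    rintro (a | a | _) (b | b | _) h <;>
      simp_all [Enc.toPair, toLex_inj, Prod.ext_iff])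

/-- Largest position `j < i` (0-based) carrying the same symbol as position `i`. -/
def prevOcc (w : List PSym) (i : ℕ) : Option ℕ :=
  ((List.range i).filter (fun j => w[j]? = w[i]?)).max?

/-- The p-encoding of position `i` (0-based) of `w`. -/
def pencSym (w : List PSym) (i : ℕ) : Enc :=
  match w[i]? with
  | some (PSym.s a) => Enc.s a
  | some (PSym.p _) =>
    match prevOcc w i with
    | some j => Enc.fin (i - j)
    | none => Enc.inf
  | none => Enc.inf

/-- The p-encoding ⟨w⟩ of a p-string `w`. -/
def penc (w : List PSym) : List Enc :=
  (List.range w.length).map (pencSym w)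

/-- Lexicographic (strict) order on p-encoded strings. -/
def lexLt (x y : List Enc) : Prop := List.Lex (· < ·) x y

def lexLe (x y : List Enc) : Prop := lexLt x y ∨ x = y

/-- Length of the longest common prefix. -/
def lcp {α : Type*} [DecidableEq α] : List α → List α → ℕ
  | a :: x, b :: y => if a = b then lcp x y + 1 else 0
  | _, _ => 0

/-- Number of ∞'s in the longest common prefix of two p-encoded strings. -/
def lcpInf (x y : List Enc) : ℕ := (x.take (lcp x y)).count Enc.inf

/-- Number of distinct p-symbols occurring in `w` (denoted |w|_p). -/
def distinctP (w : List PSym) : ℕ :=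
  (w.filterMap (fun s => match s with | PSym.p a => some a | PSym.s _ => none)).dedup.length

/-- For `w` starting with a p-symbol: the rank of `w[1]` among the distinct
p-symbols of `w[1..h+1]`, where `h+1 = min{|w|, second occurrence of w[1] in w}`. -/
def fceRank (w : List PSym) : ℕ :=
  match w with
  | [] => 0
  | c :: rest => distinctP ((c :: rest).take (min (c :: rest).length (2 + rest.idxOf c)))

/-- The function fce from the paper; `fce ε = $` is modelled as `Enc.s 0`. -/
def fce (w : List PSym) : Enc :=
  match w with
  | [] => Enc.s 0
  | PSym.s a :: _ => Enc.s a
  | w => Enc.fin (fceRank w)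

/-!
Write `x = c x'`, `y = d y'` and let `h` be the first position of `c` in `x'`. The ∞'s of `⟨w⟩`
mark the leftmost occurrences of the p-symbols of `w`, so `fce(x)` is the number of ∞'s in
`⟨x'⟩[1..h]`, the last of them at `h`. Hence `lcp∞(⟨x'⟩, ⟨y'⟩) ≥ fce(x)` forces `⟨x'⟩` and `⟨y'⟩`
to agree on `[1..h]`, and then `fce(y) > fce(x)` forces `d ∉ y'[1..h]`. So `⟨x⟩` and `⟨y⟩` both
begin with `∞ ⟨x'⟩[1..h-1]`, and at position `h + 1` the encoding `⟨x⟩` has the distance `h` back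
to `x[1]`, while `⟨y⟩` has `⟨y'⟩[h] = ⟨x'⟩[h] = ∞`.
-/

open List

theorem max?_map_succ (l : List ℕ) : (l.map Nat.succ).max? = l.max?.map Nat.succ := by
  induction l with
  | nil => rfl
  | cons a l ih =>
    simp only [map_cons, max?_cons, ih]
    cases l.max? <;> simp [Nat.succ_max_succ]

theorem getElem?_ne_of_lt_idxOf {α : Type*} [DecidableEq α] {w : List α} {c : α} {j : ℕ}
    (hj : j < w.idxOf c) : w[j]? ≠ some c := fun hc => by
  have hmem : c ∈ w.take (j + 1) := mem_iff_getElem?.2 ⟨j, by simpa [getElem?_take] using hc⟩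
  have := (mem_take_iff_idxOf_lt (mem_of_mem_take hmem)).1 hmem
  omega

theorem notMem_take_idxOf {α : Type*} [DecidableEq α] {w : List α} {c : α} :
    c ∉ w.take (w.idxOf c) := fun h =>
  lt_irrefl _ ((mem_take_iff_idxOf_lt (mem_of_mem_take h)).1 h)

section Lcp

variable {α : Type*} [DecidableEq α]

theorem take_lcp (x y : List α) : x.take (lcp x y) = y.take (lcp x y) := by
  induction x generalizing y with
  | nil => simp [lcp]
  | cons a x ih =>
    cases y with
    | nil => simp [lcp]
    | cons b y => by_cases hab : a = b <;> simp [lcp, hab, ih]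

theorem take_eq_take_of_le_lcp {x y : List α} {n : ℕ} (h : n ≤ lcp x y) :
    x.take n = y.take n := by
  rw [← min_eq_left h, ← take_take, take_lcp, take_take]

theorem lcp_eq_length_of_prefix {L x y : List α} {u v : α}
    (hx : L ++ [u] <+: x) (hy : L ++ [v] <+: y) (huv : u ≠ v) : lcp x y = L.length := by
  obtain ⟨x, rfl⟩ := hx
  obtain ⟨y, rfl⟩ := hy
  simp only [append_assoc, singleton_append]
  induction L with
  | nil => simp [lcp, huv]
  | cons c L ih => simp [lcp, ih]

end Lcp

theorem lex_of_prefix {α : Type*} {r : α → α → Prop} {L x y : List α} {u v : α}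
    (hx : L ++ [u] <+: x) (hy : L ++ [v] <+: y) (huv : r u v) : Lex r x y := by
  obtain ⟨x, rfl⟩ := hx
  obtain ⟨y, rfl⟩ := hy
  simpa using (Lex.rel huv).append_left r L

theorem lcpInf_le_count_take {x y : List Enc} {n : ℕ} (h : lcp x y ≤ n) :
    lcpInf x y ≤ (x.take n).count Enc.inf :=
  (take_sublist_take_left h).count_le _

theorem lcpInf_eq_count_of_prefix {L x y : List Enc} {u v : Enc}
    (hx : L ++ [u] <+: x) (hy : L ++ [v] <+: y) (huv : u ≠ v) : lcpInf x y = L.count Enc.inf := by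
  rw [lcpInf, lcp_eq_length_of_prefix hx hy huv,
    ← prefix_iff_eq_take.mp ((prefix_append L [u]).trans hx)]

theorem Enc.fin_lt_inf (d : ℕ) : Enc.fin d < Enc.inf :=
  Prod.Lex.left _ _ (by norm_num : (1 : ℕ) < 2)

section Encoding

variable {w : List PSym} {i n t : ℕ}

theorem prevOcc_eq_none_iff {c : PSym} (hc : w[i]? = some c) :
    prevOcc w i = none ↔ c ∉ w.take i := by
  rw [prevOcc, max?_eq_none_iff, filter_eq_nil_iff, hc, mem_iff_getElem?]
  simp [getElem?_take]

theorem pencSym_eq_inf_iff (hc : w[i]? = some (PSym.p t)) :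
    pencSym w i = Enc.inf ↔ PSym.p t ∉ w.take i := by
  rw [← prevOcc_eq_none_iff hc]
  unfold pencSym
  rw [hc]
  cases prevOcc w i <;> simp

theorem prevOcc_cons_succ {c : PSym} (hc : w[i]? ≠ some c) :
    prevOcc (c :: w) (i + 1) = (prevOcc w i).map Nat.succ := by
  unfold prevOcc
  rw [range_succ_eq_map, filter_cons, filter_map]
  have hshift : ((fun j => decide ((c :: w)[j]? = (c :: w)[i + 1]?)) ∘ Nat.succ)
      = fun j => decide (w[j]? = w[i]?) := by
    funext j; simp
  have hzero : decide ((c :: w)[0]? = (c :: w)[i + 1]?) = false := by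
    simpa using fun h => hc h.symm
  rw [hshift, hzero, if_neg (by simp), max?_map_succ]

theorem pencSym_cons_succ {c : PSym} (hc : w[i]? ≠ some c) :
    pencSym (c :: w) (i + 1) = pencSym w i := by
  unfold pencSym
  rw [getElem?_cons_succ, prevOcc_cons_succ hc]
  cases w[i]? with
  | none => rfl
  | some s => cases s <;> cases prevOcc w i <;> simp

theorem prevOcc_cons_idxOf_succ {c : PSym} (hc : c ∈ w) :
    prevOcc (c :: w) (w.idxOf c + 1) = some 0 := by
  unfold prevOcc
  rw [getElem?_cons_succ, getElem?_idxOf hc, range_succ_eq_map, filter_cons, filter_map]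
  have hnone : filter ((fun j => decide ((c :: w)[j]? = some c)) ∘ Nat.succ)
      (range (w.idxOf c)) = [] := by
    rw [filter_eq_nil_iff]
    intro j hj
    simpa using getElem?_ne_of_lt_idxOf (mem_range.1 hj)
  simp [hnone]

theorem pencSym_cons_idxOf_succ (h : PSym.p t ∈ w) :
    pencSym (PSym.p t :: w) (w.idxOf (PSym.p t) + 1) = Enc.fin (w.idxOf (PSym.p t) + 1) := by
  unfold pencSym
  rw [getElem?_cons_succ, getElem?_idxOf h, prevOcc_cons_idxOf_succ h]
  rfl

theorem pencSym_take (hi : i < n) : pencSym (w.take n) i = pencSym w i := by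
  have hprev : prevOcc (w.take n) i = prevOcc w i := by
    unfold prevOcc
    congr 1
    refine filter_congr fun j hj => ?_
    rw [getElem?_take, getElem?_take, if_pos (by simp at hj; omega), if_pos hi]
  unfold pencSym
  rw [getElem?_take, if_pos hi, hprev]

theorem length_penc (w : List PSym) : (penc w).length = w.length := by
  simp [penc]

theorem getElem?_penc (hi : i < w.length) : (penc w)[i]? = some (pencSym w i) := by
  simp [penc, hi]

theorem penc_take (w : List PSym) (n : ℕ) : penc (w.take n) = (penc w).take n := by
  unfold penc
  rw [length_take, ← map_take, take_range, min_comm]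
  exact map_congr_left fun i hi => pencSym_take (by simp at hi; omega)

theorem penc_append_singleton (w : List PSym) (c : PSym) :
    penc (w ++ [c]) = penc w ++ [pencSym (w ++ [c]) w.length] := by
  have hlen : (penc (w ++ [c])).length = w.length + 1 := by simp [length_penc]
  rw [← take_length (l := penc (w ++ [c])), hlen, take_add_one, ← penc_take, take_left,
    getElem?_penc (by simp)]
  rfl

theorem penc_cons_of_notMem (h : PSym.p t ∉ w) : penc (PSym.p t :: w) = Enc.inf :: penc w := by
  unfold penc
  rw [length_cons, range_succ_eq_map, map_cons, map_map]
  congr 1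
  exact map_congr_left fun i _ => pencSym_cons_succ fun hc => h (mem_of_getElem? hc)

theorem penc_cons_take_of_notMem (h : PSym.p t ∉ w.take n) :
    (penc (PSym.p t :: w)).take (n + 1) = Enc.inf :: (penc w).take n := by
  rw [← penc_take, take_succ_cons, penc_cons_of_notMem h, penc_take]

theorem getElem?_penc_idxOf (h : PSym.p t ∈ w) : (penc w)[w.idxOf (PSym.p t)]? = some Enc.inf := by
  rw [getElem?_penc (idxOf_lt_length_iff.2 h),
    (pencSym_eq_inf_iff (getElem?_idxOf h)).2 notMem_take_idxOf]

theorem penc_cons_take_idxOf (h : PSym.p t ∈ w) :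
    (penc (PSym.p t :: w)).take (w.idxOf (PSym.p t) + 2) =
      Enc.inf :: (penc w).take (w.idxOf (PSym.p t)) ++ [Enc.fin (w.idxOf (PSym.p t) + 1)] := by
  have hlt := idxOf_lt_length_iff.2 h
  rw [take_add_one, penc_cons_take_of_notMem notMem_take_idxOf,
    getElem?_penc (by simp; omega), pencSym_cons_idxOf_succ h]
  rfl

end Encoding

def pNames (w : List PSym) : List ℕ :=
  w.filterMap (fun s => match s with | PSym.p a => some a | PSym.s _ => none)

theorem mem_pNames {w : List PSym} {t : ℕ} : t ∈ pNames w ↔ PSym.p t ∈ w := by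
  simp only [pNames, mem_filterMap]
  constructor
  · rintro ⟨_ | a, hs, ha⟩ <;> simp_all
  · exact fun h => ⟨PSym.p t, h, rfl⟩

theorem distinctP_eq_card (w : List PSym) : distinctP w = (pNames w).toFinset.card :=
  (card_toFinset _).symm

theorem distinctP_append_s (w : List PSym) (a : ℕ) :
    distinctP (w ++ [PSym.s a]) = distinctP w := by
  simp [distinctP]

theorem distinctP_append_p (w : List PSym) (t : ℕ) :
    distinctP (w ++ [PSym.p t]) = distinctP w + if PSym.p t ∈ w then 0 else 1 := by
  have hnames : (pNames (w ++ [PSym.p t])).toFinset = insert t (pNames w).toFinset := by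
    ext; simp [pNames]
  rw [distinctP_eq_card, distinctP_eq_card, hnames]
  split_ifs with h
  · rw [Finset.insert_eq_of_mem (mem_toFinset.2 (mem_pNames.2 h))]; rfl
  · exact Finset.card_insert_of_notMem (mt (mem_pNames.1 ∘ mem_toFinset.1) h)

theorem distinctP_cons_of_mem {c : PSym} {w : List PSym} (h : c ∈ w) :
    distinctP (c :: w) = distinctP w := by
  cases c with
  | s a => simp [distinctP]
  | p t =>
    have hnames : pNames (PSym.p t :: w) = t :: pNames w := rfl
    rw [distinctP_eq_card, distinctP_eq_card, hnames, toFinset_cons,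
      Finset.insert_eq_of_mem (mem_toFinset.2 (mem_pNames.2 h))]

theorem count_inf_penc (w : List PSym) : (penc w).count Enc.inf = distinctP w := by
  induction w using reverseRecOn with
  | nil => rfl
  | append_singleton w c ih =>
    rw [penc_append_singleton, count_append, ih, count_singleton']
    cases c with
    | s a => simp [pencSym, distinctP_append_s]
    | p t =>
      have hinf := pencSym_eq_inf_iff (getElem?_concat_length (l := w) (a := PSym.p t))
      rw [take_left] at hinf
      by_cases h : PSym.p t ∈ w <;> simp [distinctP_append_p, hinf, h]

theorem fceRank_cons_eq_count_inf {w : List PSym} {t : ℕ} (h : PSym.p t ∈ w) :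
    fceRank (PSym.p t :: w) = ((penc w).take (w.idxOf (PSym.p t) + 1)).count Enc.inf := by
  have hlt := idxOf_lt_length_iff.2 h
  have hmem : PSym.p t ∈ w.take (w.idxOf (PSym.p t) + 1) :=
    (mem_take_iff_idxOf_lt h).2 (Nat.lt_succ_self _)
  rw [← penc_take, count_inf_penc, ← distinctP_cons_of_mem hmem, ← take_succ_cons]
  change distinctP (take (min (w.length + 1) (2 + w.idxOf (PSym.p t))) _) = _
  congr 2
  omega

/-- Case (B2): both strings start with p-symbols, e = lcp∞(⟨x[2..]⟩,⟨y[2..]⟩),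
fce(x) ≤ e and fce(x) < fce(y).  Then ⟨x⟩ < ⟨y⟩, lcp(⟨x⟩,⟨y⟩) = h where `h` is
the (1-based) first occurrence position of x[1] in x[2..], and
lcp∞(⟨x⟩,⟨y⟩) = fce(x); no order assumption on the tails is needed. -/
theorem stmt7 (a b : ℕ) (xs ys : List PSym)
    (e : ℕ) (he : e = lcpInf (penc xs) (penc ys))
    (hmem : PSym.p a ∈ xs)
    (hle : fceRank (PSym.p a :: xs) ≤ e)
    (hlt : fceRank (PSym.p a :: xs) < fceRank (PSym.p b :: ys)) :
    lexLt (penc (PSym.p a :: xs)) (penc (PSym.p b :: ys)) ∧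
    lcp (penc (PSym.p a :: xs)) (penc (PSym.p b :: ys)) =
      xs.idxOf (PSym.p a) + 1 ∧
    lcpInf (penc (PSym.p a :: xs)) (penc (PSym.p b :: ys)) =
      fceRank (PSym.p a :: xs) := by
  set h := xs.idxOf (PSym.p a)
  set L := Enc.inf :: (penc xs).take h
  have htake_succ : (penc xs).take (h + 1) = (penc xs).take h ++ [Enc.inf] := by
    rw [take_add_one, getElem?_penc_idxOf hmem]; rfl
  have hcount : ((penc xs).take h).count Enc.inf + 1 = fceRank (PSym.p a :: xs) := by
    rw [fceRank_cons_eq_count_inf hmem, htake_succ, count_append]; simp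
  have hagree : (penc xs).take (h + 1) = (penc ys).take (h + 1) := by
    refine take_eq_take_of_le_lcp (not_lt.1 fun hcon => ?_)
    have := lcpInf_le_count_take (Nat.le_of_lt_succ hcon)
    omega
  have hb : PSym.p b ∉ ys.take (h + 1) := by
    intro hb'
    have hk := (mem_take_iff_idxOf_lt (mem_of_mem_take hb')).1 hb'
    have : fceRank (PSym.p b :: ys) ≤ fceRank (PSym.p a :: xs) := by
      rw [fceRank_cons_eq_count_inf (mem_of_mem_take hb'), fceRank_cons_eq_count_inf hmem, hagree]
      exact (take_sublist_take_left hk).count_le _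
    omega
  have hx : L ++ [Enc.fin (h + 1)] <+: penc (PSym.p a :: xs) :=
    penc_cons_take_idxOf hmem ▸ take_prefix _ _
  have hy : L ++ [Enc.inf] <+: penc (PSym.p b :: ys) := by
    have := take_prefix (h + 2) (penc (PSym.p b :: ys))
    rwa [penc_cons_take_of_notMem hb, ← hagree, htake_succ] at this
  have hne : Enc.fin (h + 1) ≠ Enc.inf := (Enc.fin_lt_inf _).ne
  refine ⟨lex_of_prefix hx hy (Enc.fin_lt_inf _), ?_, ?_⟩
  · rw [lcp_eq_length_of_prefix hx hy hne]
    simpa [L, length_penc] using idxOf_le_length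
  · rw [lcpInf_eq_count_of_prefix hx hy hne, ← hcount]
    simp [L]
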